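/- arXiv:1902.10535 — 4 statements merged into one kernel-verified Lean document; each statement's English description precedes it below -/
import Mathlib

section
/- Let P be a preference profile on agent sets U and W of size n each, and let M be an (n−1)-robust matching for P. Then M is top-choice: every agent is matched under M to her most preferred acceptable agent. -/
open Finset

/-- A preference profile: each agent on side `U` has a strict (nodup), possibly
incomplete preference list over the agents of `W`, and vice versa.  The rank of
an agent `y` in the list `l` of an agent `x` is `l.idxOf y` (the number of
agents that `x` strictly prefers to `y`). -/
structure Profile (U W : Type) where
  prefU : U → List W
  prefW : W → List U
  nodupU : ∀ u, (prefU u).Nodup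
  nodupW : ∀ w, (prefW w).Nodup

/-- A matching between `U` and `W`. -/
structure Matching (U W : Type) where
  mu : U → Option W
  mw : W → Option U
  consistent : ∀ u w, mu u = some w ↔ mw w = some u

variable {U W : Type} [DecidableEq U] [DecidableEq W]

/-- `{u, w}` is a blocking pair of `M` in `P`: they are mutually acceptable,
not matched together, and each strictly prefers the other to its current
partner (or is unmatched). -/
def IsBlocking (P : Profile U W) (M : Matching U W) (u : U) (w : W) : Prop :=
  w ∈ P.prefU u ∧ u ∈ P.prefW w ∧ M.mu u ≠ some w ∧
  (∀ w', M.mu u = some w' → (P.prefU u).idxOf w < (P.prefU u).idxOf w') ∧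
  (∀ u', M.mw w = some u' → (P.prefW w).idxOf u < (P.prefW w).idxOf u')

/-- `M` is stable for `P`: it is individually rational (matched pairs are
mutually acceptable) and admits no blocking pair. -/
def IsStable (P : Profile U W) (M : Matching U W) : Prop :=
  (∀ u w, M.mu u = some w → w ∈ P.prefU u ∧ u ∈ P.prefW w) ∧
  ∀ u w, ¬ IsBlocking P M u w

/-- Number of discordant pairs (Kendall tau distance) between two lists. -/
def discordant {α : Type*} [DecidableEq α] (l1 l2 : List α) : ℕ :=
  ((l1.toFinset ×ˢ l1.toFinset).filter
    (fun p => l1.idxOf p.1 < l1.idxOf p.2 ∧ l2.idxOf p.2 < l2.idxOf p.1)).card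

/-- Swap distance between two preference lists: the Kendall tau distance (the
minimum number of adjacent swaps transforming one into the other) if they rank
the same set of agents, and `⊤` otherwise. -/
def listDist {α : Type*} [DecidableEq α] (l1 l2 : List α) : ℕ∞ :=
  if l1.toFinset = l2.toFinset then ((discordant l1 l2 : ℕ) : ℕ∞) else ⊤

/-- Swap distance `τ(P1, P2)` between two profiles: sum over all agents of the
swap distances between their preference lists. -/
def profDist [Fintype U] [Fintype W] (P1 P2 : Profile U W) : ℕ∞ :=
  (∑ u, listDist (P1.prefU u) (P2.prefU u)) + (∑ w, listDist (P1.prefW w) (P2.prefW w))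

/-- `M` is `d`-robust for `P`: stable in every profile at swap distance at most `d`. -/
def Robust [Fintype U] [Fintype W] (P : Profile U W) (d : ℕ) (M : Matching U W) : Prop :=
  ∀ P' : Profile U W, profDist P P' ≤ (d : ℕ∞) → IsStable P' M

/-- `M` is globally `d`-nearly stable for `P`: stable in some profile at swap
distance at most `d`. -/
def GloballyNearlyStable [Fintype U] [Fintype W] (P : Profile U W) (d : ℕ)
    (M : Matching U W) : Prop :=
  ∃ P' : Profile U W, profDist P P' ≤ (d : ℕ∞) ∧ IsStable P' M

/-- `M` is locally `d`-nearly stable for `P`: stable in some profile in which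
each agent's list changed by at most `d` swaps. -/
def LocallyNearlyStable (P : Profile U W) (d : ℕ) (M : Matching U W) : Prop :=
  ∃ P' : Profile U W,
    (∀ u, listDist (P.prefU u) (P'.prefU u) ≤ (d : ℕ∞)) ∧
    (∀ w, listDist (P.prefW w) (P'.prefW w) ≤ (d : ℕ∞)) ∧
    IsStable P' M

/-- Every agent is matched. -/
def IsPerfect (M : Matching U W) : Prop :=
  (∀ u, M.mu u ≠ none) ∧ (∀ w, M.mw w ≠ none)

/-- Egalitarian cost: sum over matched agents of the rank of their partner. -/
def egalCost [Fintype U] [Fintype W] (P : Profile U W) (M : Matching U W) : ℕ :=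
  (∑ u, (M.mu u).elim 0 (fun w => (P.prefU u).idxOf w)) +
  (∑ w, (M.mw w).elim 0 (fun u => (P.prefW w).idxOf u))


/-- A matching is top-choice if every agent with a nonempty preference list is
matched to its most preferred acceptable agent. -/
def TopChoice (P : Profile U W) (M : Matching U W) : Prop :=
  (∀ (u : U) (w : W), (P.prefU u).head? = some w → M.mu u = some w) ∧
  (∀ (w : W) (u : U), (P.prefW w).head? = some u → M.mw w = some u)


/-- Removing an element from a list preserves the relative order of the others. -/
lemma erase_indexOf_lt {α : Type*} [DecidableEq α] {l : List α} {u a b : α}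
    (hau : a ≠ u) (hbu : b ≠ u) (hb : b ∈ l)
    (hlt : l.idxOf a < l.idxOf b) :
    (l.erase u).idxOf a < (l.erase u).idxOf b := by
  induction l with
  | nil => simp at hb
  | cons c t ih =>
    by_cases hcu : c = u
    · subst hcu
      rw [List.erase_cons_head]
      rw [List.idxOf_cons_ne _ (fun h => hau h.symm),
        List.idxOf_cons_ne _ (fun h => hbu h.symm)] at hlt
      exact Nat.lt_of_succ_lt_succ hlt
    · rw [List.erase_cons_tail (by simpa using hcu)]
      by_cases hac : a = c
      · subst hac
        have hab : a ≠ b := fun h => by subst h; exact lt_irrefl _ hlt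
        rw [List.idxOf_cons_self, List.idxOf_cons_ne _ hab]
        exact Nat.succ_pos _
      · have hbc : b ≠ c := by
          intro h; subst h
          rw [List.idxOf_cons_self] at hlt; omega
        have hbt : b ∈ t := by
          rcases List.mem_cons.mp hb with h | h
          · exact absurd h hbc
          · exact h
        rw [List.idxOf_cons_ne _ (fun h => hac h.symm),
          List.idxOf_cons_ne _ (fun h => hbc h.symm)] at hlt
        rw [List.idxOf_cons_ne _ (fun h => hac h.symm),
          List.idxOf_cons_ne _ (fun h => hbc h.symm)]
        exact Nat.succ_lt_succ (ih hbt (Nat.lt_of_succ_lt_succ hlt))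

lemma listDist_self {α : Type*} [DecidableEq α] (l : List α) : listDist l l = 0 := by
  rw [listDist, if_pos rfl]
  have : discordant l l = 0 := by
    rw [discordant, Finset.filter_false_of_mem, Finset.card_empty]
    intro p _ h
    omega
  simp [this]

lemma listDist_cons_erase {α : Type*} [DecidableEq α] {l : List α} {u : α}
    (hn : l.Nodup) (hu : u ∈ l) :
    listDist l (u :: l.erase u) ≤ ((l.length - 1 : ℕ) : ℕ∞) := by
  have htf : l.toFinset = (u :: l.erase u).toFinset := by
    ext x
    by_cases hx : x = u
    · subst hx; simp [hu]
    · simp [hx, List.mem_erase_of_ne hx]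
  rw [listDist, if_pos htf]
  rw [Nat.cast_le]
  rw [discordant]
  calc ((l.toFinset ×ˢ l.toFinset).filter
        (fun p => l.idxOf p.1 < l.idxOf p.2 ∧
          (u :: l.erase u).idxOf p.2 < (u :: l.erase u).idxOf p.1)).card
      ≤ ((l.toFinset.erase u) ×ˢ {u}).card := by
        apply Finset.card_le_card
        intro p hp
        rw [Finset.mem_filter] at hp
        obtain ⟨hmem, h1, h2⟩ := hp
        rw [Finset.mem_product] at hmem
        have hp1l : p.1 ∈ l := List.mem_toFinset.mp hmem.1
        have hp2l : p.2 ∈ l := List.mem_toFinset.mp hmem.2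
        have hp1u : p.1 ≠ u := by
          intro h
          rw [h, List.idxOf_cons_self] at h2
          omega
        have hp2u : p.2 = u := by
          by_contra hp2u
          rw [List.idxOf_cons_ne _ (fun h => hp2u h.symm),
            List.idxOf_cons_ne _ (fun h => hp1u h.symm)] at h2
          have := erase_indexOf_lt hp1u hp2u hp2l h1
          omega
        rw [Finset.mem_product]
        exact ⟨Finset.mem_erase.mpr ⟨hp1u, hmem.1⟩, by simp [hp2u]⟩
    _ ≤ l.length - 1 := by
        rw [Finset.card_product, Finset.card_singleton, mul_one,
          Finset.card_erase_of_mem (List.mem_toFinset.mpr hu),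
          List.toFinset_card_of_nodup hn]

/-- Key step: if `u`'s top choice is `w`, then any `(n-1)`-robust matching
matches `u` to `w`. -/
lemma aux_top {U W : Type} [DecidableEq U] [DecidableEq W] [Fintype U] [Fintype W]
    (n : ℕ) (hU : Fintype.card U = n)
    (P : Profile U W) (M : Matching U W) (hrob : Robust P (n - 1) M)
    (u : U) (w : W) (hh : (P.prefU u).head? = some w) (hm : u ∈ P.prefW w) :
    M.mu u = some w := by
  by_contra hne
  set l := P.prefW w with hl
  have hnl : l.Nodup := P.nodupW w
  have hnl' : (u :: l.erase u).Nodup :=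
    List.nodup_cons.mpr ⟨hnl.not_mem_erase, hnl.erase u⟩
  set P' : Profile U W :=
    { prefU := P.prefU
      prefW := fun w' => if w' = w then u :: l.erase u else P.prefW w'
      nodupU := P.nodupU
      nodupW := by
        intro w'; split
        · exact hnl'
        · exact P.nodupW w' } with hP'
  have hdist : profDist P P' ≤ ((n - 1 : ℕ) : ℕ∞) := by
    rw [profDist]
    have h1 : (∑ u', listDist (P.prefU u') (P'.prefU u')) = 0 := by
      apply Finset.sum_eq_zero
      intro u' _
      exact listDist_self _
    have h2 : (∑ w', listDist (P.prefW w') (P'.prefW w'))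
        = listDist l (u :: l.erase u) := by
      rw [Finset.sum_eq_single_of_mem w (Finset.mem_univ w)]
      · simp [hP']; rfl
      · intro w' _ hw'
        have : P'.prefW w' = P.prefW w' := by simp [hP', hw']
        rw [this]; exact listDist_self _
    rw [h1, h2, zero_add]
    calc listDist l (u :: l.erase u) ≤ ((l.length - 1 : ℕ) : ℕ∞) :=
          listDist_cons_erase hnl hm
      _ ≤ ((n - 1 : ℕ) : ℕ∞) := by
          rw [Nat.cast_le]
          exact Nat.sub_le_sub_right (hU ▸ hnl.length_le_card) 1
  have hstab := hrob P' hdist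
  obtain ⟨tl, htl⟩ : ∃ tl, P.prefU u = w :: tl := by
    cases h : P.prefU u with
    | nil => rw [h] at hh; simp at hh
    | cons c t =>
      rw [h] at hh; simp at hh
      exact ⟨t, by rw [hh]⟩
  apply hstab.2 u w
  refine ⟨?_, ?_, hne, ?_, ?_⟩
  · show w ∈ P.prefU u
    rw [htl]; exact List.mem_cons_self
  · show u ∈ P'.prefW w
    simp [hP']
  · intro w' hw'
    have hww' : w' ≠ w := fun h => hne (h ▸ hw')
    show (P.prefU u).idxOf w < (P.prefU u).idxOf w'
    rw [htl, List.idxOf_cons_self, List.idxOf_cons_ne _ (fun h => hww' h.symm)]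
    exact Nat.succ_pos _
  · intro u' hu'
    have huu' : u' ≠ u := by
      intro h
      rw [h] at hu'
      exact hne ((M.consistent u w).mpr hu')
    show (P'.prefW w).idxOf u < (P'.prefW w).idxOf u'
    have : P'.prefW w = u :: l.erase u := by simp [hP']
    rw [this, List.idxOf_cons_self, List.idxOf_cons_ne _ (fun h => huu' h.symm)]
    exact Nat.succ_pos _

lemma robust_transpose {U W : Type} [DecidableEq U] [DecidableEq W] [Fintype U] [Fintype W]
    (P : Profile U W) (d : ℕ) (M : Matching U W) (h : Robust P d M) :
    Robust ⟨P.prefW, P.prefU, P.nodupW, P.nodupU⟩ d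
      ⟨M.mw, M.mu, fun a b => (M.consistent b a).symm⟩ := by
  intro Q hQ
  have hQ' : profDist P ⟨Q.prefW, Q.prefU, Q.nodupW, Q.nodupU⟩ ≤ (d : ℕ∞) := by
    rw [profDist] at hQ ⊢
    rw [add_comm]
    exact hQ
  obtain ⟨h1, h2⟩ := h ⟨Q.prefW, Q.prefU, Q.nodupW, Q.nodupU⟩ hQ'
  constructor
  · intro a b hab
    have := h1 b a ((M.consistent b a).mpr hab)
    exact ⟨this.2, this.1⟩
  · intro a b hB
    obtain ⟨hB1, hB2, hB3, hB4, hB5⟩ := hB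
    refine h2 b a ⟨hB2, hB1, ?_, hB5, hB4⟩
    intro hc
    exact hB3 ((M.consistent b a).mp hc)

/-- Every `(n−1)`-robust matching is top-choice. -/
theorem robust_matching_is_top_choice
    {U W : Type} [DecidableEq U] [DecidableEq W] [Fintype U] [Fintype W]
    (n : ℕ) (hU : Fintype.card U = n) (hW : Fintype.card W = n)
    (P : Profile U W)
    (hmut : ∀ (u : U) (w : W), w ∈ P.prefU u ↔ u ∈ P.prefW w)
    (M : Matching U W) (hrob : Robust P (n - 1) M) :
    TopChoice P M := by
  constructor
  · intro u w hh
    have hm : u ∈ P.prefW w := (hmut u w).mp (List.mem_of_mem_head? hh)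
    exact aux_top n hU P M hrob u w hh hm
  · intro w u hh
    have hm : w ∈ P.prefU u := (hmut u w).mpr (List.mem_of_mem_head? hh)
    exact aux_top n hW ⟨P.prefW, P.prefU, P.nodupW, P.nodupU⟩
      ⟨M.mw, M.mu, fun a b => (M.consistent b a).symm⟩
      (robust_transpose P (n - 1) M hrob) w u hh hm
end

section
/- Let P be a preference profile on agent sets U and W of size n each that admits an (n−1)-robust matching. Then P is position-wise distinct: there are no two distinct agents x1, x2 (on the same side) and an agent y such that y occupies the same position (rank) in both x1's and x2's preference lists. -/
open Finset

variable {U W : Type} [DecidableEq U] [DecidableEq W]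

/-- A profile is position-wise distinct if no two agents of the same side have
the same agent at the same position of their preference lists. -/
def PositionWiseDistinct (P : Profile U W) : Prop :=
  (∀ (u1 u2 : U) (w : W), u1 ≠ u2 → w ∈ P.prefU u1 → w ∈ P.prefU u2 →
      (P.prefU u1).idxOf w ≠ (P.prefU u2).idxOf w) ∧
  (∀ (w1 w2 : W) (u : U), w1 ≠ w2 → u ∈ P.prefW w1 → u ∈ P.prefW w2 →
      (P.prefW w1).idxOf u ≠ (P.prefW w2).idxOf u)

/- ===================== auxiliary lemmas ===================== -/

section AuxLists

lemma discordant_self {α : Type*} [DecidableEq α] (l : List α) : discordant l l = 0 := by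
  simp only [discordant, Finset.card_eq_zero]
  apply Finset.filter_false_of_mem
  rintro ⟨a,b⟩ _
  simp only [not_and]
  omega

lemma move_up {α : Type*} [DecidableEq α] (A₁ A₂ C : List α) (w : α)
    (hnd : (A₁ ++ A₂ ++ w :: C).Nodup) :
    ∃ l' : List α, l'.Nodup ∧ l'.toFinset = (A₁ ++ A₂ ++ w :: C).toFinset ∧
      discordant (A₁ ++ A₂ ++ w :: C) l' ≤ A₂.length ∧
      l'.idxOf w = A₁.length ∧
      (∀ x, x ∈ (A₁ ++ A₂ ++ w :: C) → x ≠ w →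
        A₁.length ≤ (A₁ ++ A₂ ++ w :: C).idxOf x → A₁.length < l'.idxOf x) := by
  have hstruct := hnd
  rw [List.nodup_append, List.nodup_append] at hstruct
  obtain ⟨⟨hndA1, hndA2, hdisA⟩, hndwC, hdis⟩ := hstruct
  have hw1 : w ∉ A₁ := fun h => hdis w (List.mem_append_left _ h) w List.mem_cons_self rfl
  have hw2 : w ∉ A₂ := fun h => hdis w (List.mem_append_right _ h) w List.mem_cons_self rfl
  have hw12 : w ∉ A₁ ++ A₂ := by simp [hw1, hw2]
  have hwC : w ∉ C := (List.nodup_cons.1 hndwC).1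
  have hperm : (A₁ ++ A₂ ++ w :: C).Perm (A₁ ++ w :: (A₂ ++ C)) := by
    rw [List.append_assoc]
    exact List.Perm.append_left A₁ List.perm_middle
  have hidxw : (A₁ ++ A₂ ++ w :: C).idxOf w = A₁.length + A₂.length := by
    rw [List.idxOf_append_of_notMem hw12, List.idxOf_cons_self]
    simp
  have hidxw' : (A₁ ++ w :: (A₂ ++ C)).idxOf w = A₁.length := by
    rw [List.idxOf_append_of_notMem hw1, List.idxOf_cons_self]
    simp
  have hA1 : ∀ x ∈ A₁, (A₁ ++ A₂ ++ w :: C).idxOf x = A₁.idxOf x ∧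
      (A₁ ++ w :: (A₂ ++ C)).idxOf x = A₁.idxOf x := by
    intro x hx
    exact ⟨by rw [List.idxOf_append_of_mem (List.mem_append_left _ hx),
        List.idxOf_append_of_mem hx],
      by rw [List.idxOf_append_of_mem hx]⟩
  have hA2 : ∀ x ∈ A₂, (A₁ ++ A₂ ++ w :: C).idxOf x = A₁.length + A₂.idxOf x ∧
      (A₁ ++ w :: (A₂ ++ C)).idxOf x = A₁.length + 1 + A₂.idxOf x := by
    intro x hx
    have hx1 : x ∉ A₁ := fun h => hdisA x h x hx rfl
    have hxw : x ≠ w := fun h => hw2 (h ▸ hx)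
    constructor
    · rw [List.idxOf_append_of_mem (List.mem_append_right _ hx),
        List.idxOf_append_of_notMem hx1]
    · rw [List.idxOf_append_of_notMem hx1, List.idxOf_cons_ne _ (Ne.symm hxw),
        List.idxOf_append_of_mem hx]
      omega
  have hC : ∀ x ∈ C, (A₁ ++ A₂ ++ w :: C).idxOf x = A₁.length + A₂.length + 1 + C.idxOf x ∧
      (A₁ ++ w :: (A₂ ++ C)).idxOf x = A₁.length + 1 + A₂.length + C.idxOf x := by
    intro x hx
    have hx12 : x ∉ A₁ ++ A₂ := fun h => hdis x h x (List.mem_cons_of_mem _ hx) rfl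
    have hx1 : x ∉ A₁ := fun h => hx12 (List.mem_append_left _ h)
    have hx2 : x ∉ A₂ := fun h => hx12 (List.mem_append_right _ h)
    have hxw : x ≠ w := fun h => hwC (h ▸ hx)
    constructor
    · rw [List.idxOf_append_of_notMem hx12, List.idxOf_cons_ne _ (Ne.symm hxw)]
      simp; omega
    · rw [List.idxOf_append_of_notMem hx1, List.idxOf_cons_ne _ (Ne.symm hxw),
        List.idxOf_append_of_notMem hx2]
      omega
  have hmono : ∀ x ∈ (A₁ ++ A₂ ++ w :: C), x ≠ w →
      (A₁ ++ A₂ ++ w :: C).idxOf x ≤ (A₁ ++ w :: (A₂ ++ C)).idxOf x ∧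
      (A₁ ++ w :: (A₂ ++ C)).idxOf x ≤ (A₁ ++ A₂ ++ w :: C).idxOf x + 1 := by
    intro x hx hxw
    rcases List.mem_append.1 hx with hx' | hx'
    · rcases List.mem_append.1 hx' with h1 | h2
      · obtain ⟨e1, e2⟩ := hA1 x h1; omega
      · obtain ⟨e1, e2⟩ := hA2 x h2; omega
    · rcases List.mem_cons.1 hx' with h | hc
      · exact absurd h hxw
      · obtain ⟨e1, e2⟩ := hC x hc; omega
  have hfin : (A₁ ++ w :: (A₂ ++ C)).toFinset = (A₁ ++ A₂ ++ w :: C).toFinset := by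
    ext a; simp only [List.mem_toFinset]; exact (hperm.mem_iff).symm
  refine ⟨A₁ ++ w :: (A₂ ++ C), hperm.nodup hnd, hfin, ?_, hidxw', ?_⟩
  · have hsub : ((A₁ ++ A₂ ++ w :: C).toFinset ×ˢ (A₁ ++ A₂ ++ w :: C).toFinset).filter
        (fun p => (A₁ ++ A₂ ++ w :: C).idxOf p.1 < (A₁ ++ A₂ ++ w :: C).idxOf p.2 ∧
          (A₁ ++ w :: (A₂ ++ C)).idxOf p.2 < (A₁ ++ w :: (A₂ ++ C)).idxOf p.1)
        ⊆ A₂.toFinset ×ˢ {w} := by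
      rintro ⟨p1, p2⟩ hp
      simp only [Finset.mem_filter, Finset.mem_product, List.mem_toFinset] at hp
      obtain ⟨⟨hp1, hp2⟩, hlt, hlt'⟩ := hp
      simp only [Finset.mem_product, List.mem_toFinset, Finset.mem_singleton]
      by_cases h2w : p2 = w
      · refine ⟨?_, h2w⟩
        rw [h2w] at hlt hlt'
        have h1w : p1 ≠ w := by rintro rfl; omega
        rcases List.mem_append.1 hp1 with hx' | hx'
        · rcases List.mem_append.1 hx' with h1 | h2
          · obtain ⟨e1, e2⟩ := hA1 p1 h1
            have : A₁.idxOf p1 < A₁.length := List.idxOf_lt_length_iff.2 h1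
            omega
          · exact h2
        · rcases List.mem_cons.1 hx' with h | hc
          · exact absurd h h1w
          · obtain ⟨e1, e2⟩ := hC p1 hc
            omega
      · by_cases h1w : p1 = w
        · rw [h1w] at hlt hlt'
          obtain ⟨e1, e2⟩ := hmono p2 hp2 h2w
          omega
        · obtain ⟨e1, e2⟩ := hmono p1 hp1 h1w
          obtain ⟨f1, f2⟩ := hmono p2 hp2 h2w
          omega
    calc discordant (A₁ ++ A₂ ++ w :: C) (A₁ ++ w :: (A₂ ++ C))
        ≤ (A₂.toFinset ×ˢ ({w} : Finset α)).card := Finset.card_le_card hsub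
      _ = A₂.toFinset.card * 1 := by rw [Finset.card_product, Finset.card_singleton]
      _ ≤ A₂.length := by rw [mul_one]; exact A₂.toFinset_card_le
  · intro x hx hxw hge
    rcases List.mem_append.1 hx with hx' | hx'
    · rcases List.mem_append.1 hx' with h1 | h2
      · obtain ⟨e1, e2⟩ := hA1 x h1
        have : A₁.idxOf x < A₁.length := List.idxOf_lt_length_iff.2 h1
        omega
      · obtain ⟨e1, e2⟩ := hA2 x h2; omega
    · rcases List.mem_cons.1 hx' with h | hc
      · exact absurd h hxw
      · obtain ⟨e1, e2⟩ := hC x hc; omega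

lemma move_up' {α : Type*} [DecidableEq α] (l : List α) (hnd : l.Nodup) (w : α) (hw : w ∈ l)
    (r : ℕ) (hr : r ≤ l.idxOf w) :
    ∃ l' : List α, l'.Nodup ∧ l'.toFinset = l.toFinset ∧
      discordant l l' ≤ l.idxOf w - r ∧ l'.idxOf w = r ∧
      (∀ x, x ∈ l → x ≠ w → r ≤ l.idxOf x → r < l'.idxOf x) := by
  have hk : l.idxOf w < l.length := List.idxOf_lt_length_iff.2 hw
  have heq : l.take r ++ (l.take (l.idxOf w)).drop r ++ w :: l.drop (l.idxOf w + 1) = l := by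
    have h1 : l.take r = (l.take (l.idxOf w)).take r := by
      rw [List.take_take, min_eq_left hr]
    rw [h1, List.take_append_drop r (l.take (l.idxOf w))]
    have h2 : l.drop (l.idxOf w) = w :: l.drop (l.idxOf w + 1) := by
      rw [List.drop_eq_getElem_cons hk]
      congr 1
      exact List.getElem_idxOf hk
    rw [← h2, List.take_append_drop]
  have hlen1 : (l.take r).length = r := by
    rw [List.length_take]; omega
  have hlen2 : ((l.take (l.idxOf w)).drop r).length = l.idxOf w - r := by
    rw [List.length_drop, List.length_take]; omega
  obtain ⟨l', h1, h2, h3, h4, h5⟩ :=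
    move_up (l.take r) ((l.take (l.idxOf w)).drop r) (l.drop (l.idxOf w + 1)) w
      (by rw [heq]; exact hnd)
  rw [heq] at h2 h3 h5
  rw [hlen1] at h4 h5
  rw [hlen2] at h3
  exact ⟨l', h1, h2, h3, h4, h5⟩

lemma exists_good_list {α : Type*} [DecidableEq α] (l : List α) (hnd : l.Nodup)
    (w : α) (hw : w ∈ l) (o : Option α) (ho : ∀ x, o = some x → x ∈ l) (hne : o ≠ some w) :
    ∃ l' : List α, l'.Nodup ∧ l'.toFinset = l.toFinset ∧
      discordant l l' ≤ l.idxOf w - o.elim (l.idxOf w) (fun x => l.idxOf x) ∧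
      ∀ x, o = some x → l'.idxOf w < l'.idxOf x := by
  cases o with
  | none =>
    refine ⟨l, hnd, rfl, by simp [discordant_self], ?_⟩
    intro x hx; exact absurd hx (Option.some_ne_none x).symm
  | some w' =>
    have hw' : w' ∈ l := ho w' rfl
    have hnew : w' ≠ w := fun h => hne (by rw [h])
    rcases lt_or_gt_of_ne (fun h : l.idxOf w' = l.idxOf w =>
        hnew ((List.idxOf_inj hw').1 h)) with hlt | hgt
    · obtain ⟨l', h1, h2, h3, h4, h5⟩ := move_up' l hnd w hw (l.idxOf w') (le_of_lt hlt)
      refine ⟨l', h1, h2, by simpa using h3, ?_⟩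
      rintro x hx
      injection hx with hx
      subst hx
      rw [h4]
      exact h5 w' hw' hnew le_rfl
    · refine ⟨l, hnd, rfl, by simp [discordant_self], ?_⟩
      rintro x hx
      injection hx with hx
      subst hx
      exact hgt

lemma sum_indexOf {α : Type*} [DecidableEq α] (l : List α) (hnd : l.Nodup) :
    (∑ x ∈ l.toFinset, l.idxOf x) * 2 = l.length * (l.length - 1) := by
  have hinj : Set.InjOn (fun x => l.idxOf x) l.toFinset := fun a ha b hb h =>
    (List.idxOf_inj (List.mem_toFinset.1 ha)).1 h
  have himg : l.toFinset.image (fun x => l.idxOf x) = Finset.range l.length := by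
    apply Finset.eq_of_subset_of_card_le
    · intro j hj
      simp only [Finset.mem_image, List.mem_toFinset] at hj
      obtain ⟨x, hx, rfl⟩ := hj
      exact Finset.mem_range.2 (List.idxOf_lt_length_iff.2 hx)
    · rw [Finset.card_range, Finset.card_image_of_injOn hinj, List.toFinset_card_of_nodup hnd]
  have hs : ∑ x ∈ l.toFinset, l.idxOf x = ∑ j ∈ Finset.range l.length, j := by
    rw [← himg, Finset.sum_image (fun a ha b hb h => hinj ha hb h)]
  rw [hs, Finset.sum_range_id_mul_two]

lemma fiber_bound {α : Type*} [DecidableEq α] (l : List α) (hnd : l.Nodup) {n : ℕ}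
    (hlen : l.length ≤ n) (o : Option α) (hC1 : l ≠ [] → o ≠ none)
    (hC2 : ∀ x, o = some x → l.idxOf x = 0 ∧ x ∈ l) :
    (∑ x ∈ l.toFinset.filter (fun x => o ≠ some x), l.idxOf x) * 2
      ≤ n * (l.toFinset.filter (fun x => o ≠ some x)).card := by
  cases ho : o with
  | none =>
    subst ho
    have hl : l = [] := by
      by_contra h; exact (hC1 h) rfl
    subst hl; simp
  | some w₀ =>
    subst ho
    obtain ⟨hidx0, hmem⟩ := hC2 w₀ rfl
    have hfe : l.toFinset.filter (fun x => some w₀ ≠ some x) = l.toFinset.erase w₀ := by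
      ext x
      simp only [Finset.mem_filter, Finset.mem_erase, List.mem_toFinset]
      constructor
      · rintro ⟨hx1, hx2⟩; exact ⟨fun hh => hx2 (by rw [hh]), hx1⟩
      · rintro ⟨hx1, hx2⟩
        refine ⟨hx2, fun hh => hx1 ?_⟩
        injection hh with hh
        rw [hh]
    rw [hfe]
    have hsum : ∑ x ∈ l.toFinset.erase w₀, l.idxOf x = ∑ x ∈ l.toFinset, l.idxOf x :=
      Finset.sum_erase _ hidx0
    rw [hsum, sum_indexOf l hnd, Finset.card_erase_of_mem (List.mem_toFinset.2 hmem),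
      List.toFinset_card_of_nodup hnd]
    exact Nat.mul_le_mul_right _ hlen

end AuxLists

section AuxMain

variable {U W : Type} [DecidableEq U] [DecidableEq W]

/-- Flip a profile. -/
def Profile.flip (P : Profile U W) : Profile W U :=
  ⟨P.prefW, P.prefU, P.nodupW, P.nodupU⟩

/-- Flip a matching. -/
def Matching.flip (M : Matching U W) : Matching W U :=
  ⟨M.mw, M.mu, fun w u => (M.consistent u w).symm⟩

lemma isStable_flip {P : Profile U W} {M : Matching U W} (h : IsStable P M) :
    IsStable P.flip M.flip := by
  obtain ⟨hIR, hB⟩ := h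
  constructor
  · intro w u hmw
    have := hIR u w ((M.consistent u w).2 hmw)
    exact ⟨this.2, this.1⟩
  · intro w u hblock
    obtain ⟨b1, b2, b3, b4, b5⟩ := hblock
    exact hB u w ⟨b2, b1, fun h => b3 ((M.consistent u w).1 h), b5, b4⟩

lemma robust_flip [Fintype U] [Fintype W] {P : Profile U W} {M : Matching U W} {d : ℕ}
    (h : Robust P d M) : Robust P.flip d M.flip := by
  intro Q hQ
  have hcomm : profDist P.flip Q = profDist P Q.flip := by
    simp only [profDist, Profile.flip]
    exact add_comm _ _
  have hst := h Q.flip (by rw [← hcomm]; exact hQ)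
  exact isStable_flip hst

lemma cost_ge [Fintype U] [Fintype W] {P : Profile U W} {M : Matching U W} {n : ℕ}
    (hrob : Robust P (n - 1) M)
    (u : U) (w : W) (hw : w ∈ P.prefU u) (hu : u ∈ P.prefW w) (hnm : M.mu u ≠ some w) :
    n ≤ ((P.prefU u).idxOf w
          - (M.mu u).elim ((P.prefU u).idxOf w) (fun w' => (P.prefU u).idxOf w'))
      + ((P.prefW w).idxOf u
          - (M.mw w).elim ((P.prefW w).idxOf u) (fun u' => (P.prefW w).idxOf u')) := by
  by_contra hcon
  push_neg at hcon
  have hstab : IsStable P M := hrob P (by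
    have hz : profDist P P = 0 := by simp [profDist, listDist_self]
    rw [hz]; exact zero_le)
  have hIRu : ∀ w', M.mu u = some w' → w' ∈ P.prefU u := fun w' h => (hstab.1 u w' h).1
  have hIRw : ∀ u', M.mw w = some u' → u' ∈ P.prefW w := fun u' h =>
    (hstab.1 u' w ((M.consistent u' w).mpr h)).2
  have hnm' : M.mw w ≠ some u := fun h => hnm ((M.consistent u w).mpr h)
  obtain ⟨lu, hlu1, hlu2, hlu3, hlu4⟩ :=
    exists_good_list (P.prefU u) (P.nodupU u) w hw (M.mu u) hIRu hnm
  obtain ⟨lw, hlw1, hlw2, hlw3, hlw4⟩ :=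
    exists_good_list (P.prefW w) (P.nodupW w) u hu (M.mw w) hIRw hnm'
  set P' : Profile U W := ⟨Function.update P.prefU u lu, Function.update P.prefW w lw,
    fun x => by
      rcases eq_or_ne x u with rfl | h
      · rw [Function.update_self]; exact hlu1
      · rw [Function.update_of_ne h]; exact P.nodupU x,
    fun y => by
      rcases eq_or_ne y w with rfl | h
      · rw [Function.update_self]; exact hlw1
      · rw [Function.update_of_ne h]; exact P.nodupW y⟩ with hP'
  have hPU : P'.prefU u = lu := Function.update_self _ _ _
  have hPW : P'.prefW w = lw := Function.update_self _ _ _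
  have hdist : profDist P P' ≤ ((n - 1 : ℕ) : ℕ∞) := by
    have h1 : (∑ x, listDist (P.prefU x) (P'.prefU x)) = listDist (P.prefU u) lu := by
      rw [Finset.sum_eq_single u]
      · rw [hPU]
      · intro b _ hb
        have : P'.prefU b = P.prefU b := Function.update_of_ne hb _ _
        rw [this, listDist_self]
      · intro hb; exact absurd (Finset.mem_univ u) hb
    have h2 : (∑ y, listDist (P.prefW y) (P'.prefW y)) = listDist (P.prefW w) lw := by
      rw [Finset.sum_eq_single w]
      · rw [hPW]
      · intro b _ hb
        have : P'.prefW b = P.prefW b := Function.update_of_ne hb _ _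
        rw [this, listDist_self]
      · intro hb; exact absurd (Finset.mem_univ w) hb
    have e1 : listDist (P.prefU u) lu = ((discordant (P.prefU u) lu : ℕ) : ℕ∞) := by
      rw [listDist, if_pos hlu2.symm]
    have e2 : listDist (P.prefW w) lw = ((discordant (P.prefW w) lw : ℕ) : ℕ∞) := by
      rw [listDist, if_pos hlw2.symm]
    rw [profDist, h1, h2, e1, e2, ← Nat.cast_add]
    rw [Nat.cast_le]
    omega
  have hst := hrob P' hdist
  apply hst.2 u w
  refine ⟨?_, ?_, hnm, ?_, ?_⟩
  · rw [hPU, ← List.mem_toFinset, hlu2, List.mem_toFinset]; exact hw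
  · rw [hPW, ← List.mem_toFinset, hlw2, List.mem_toFinset]; exact hu
  · intro w' hw'
    rw [hPU]
    exact hlu4 w' hw'
  · intro u' hu'
    rw [hPW]
    exact hlw4 u' hu'

end AuxMain

section KeyLemma

/-- The fiber of non-matched acceptable partners of `u`. -/
def fiberU {U W : Type} [DecidableEq U] [DecidableEq W]
    (P : Profile U W) (M : Matching U W) (u : U) : Finset W :=
  (P.prefU u).toFinset.filter (fun w' => M.mu u ≠ some w')

def fiberW {U W : Type} [DecidableEq U] [DecidableEq W]
    (P : Profile U W) (M : Matching U W) (w : W) : Finset U :=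
  (P.prefW w).toFinset.filter (fun u' => M.mw w ≠ some u')

lemma key_one_side {U W : Type} [DecidableEq U] [DecidableEq W] [Fintype U] [Fintype W]
    {n : ℕ} (hU : Fintype.card U = n) (hW : Fintype.card W = n)
    {P : Profile U W} (hmut : ∀ u w, w ∈ P.prefU u ↔ u ∈ P.prefW w)
    {M : Matching U W} (hrob : Robust P (n - 1) M)
    (u1 u2 : U) (w : W) (hne : u1 ≠ u2) (h1 : w ∈ P.prefU u1) (h2 : w ∈ P.prefU u2) :
    (P.prefU u1).idxOf w ≠ (P.prefU u2).idxOf w := by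
  intro hEq
  have hn : 1 ≤ n := by
    rw [← hU]; exact Fintype.card_pos_iff.2 ⟨u1⟩
  have hlenU : ∀ u : U, (P.prefU u).length ≤ n := fun u => hW ▸ (P.nodupU u).length_le_card
  have hlenW : ∀ y : W, (P.prefW y).length ≤ n := fun y => hU ▸ (P.nodupW y).length_le_card
  have hstab : IsStable P M := hrob P (by
    have hz : profDist P P = 0 := by simp [profDist, listDist_self]
    rw [hz]; exact zero_le)
  -- every agent with a nonempty list is matched
  have hC1U : ∀ (u : U) (w' : W), w' ∈ P.prefU u → M.mu u ≠ none := by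
    intro u w' hw' hnone
    have hu' : u ∈ P.prefW w' := (hmut u w').1 hw'
    have hnm : M.mu u ≠ some w' := by rw [hnone]; exact (Option.some_ne_none w').symm
    have hc := cost_ge hrob u w' hw' hu' hnm
    rw [hnone] at hc
    replace hc : n ≤ ((P.prefU u).idxOf w' - (P.prefU u).idxOf w')
        + ((P.prefW w').idxOf u
            - (M.mw w').elim ((P.prefW w').idxOf u) (fun u' => (P.prefW w').idxOf u')) := hc
    have hb2 := Nat.sub_le ((P.prefW w').idxOf u)
      ((M.mw w').elim ((P.prefW w').idxOf u) (fun u' => (P.prefW w').idxOf u'))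
    have hb : (P.prefW w').idxOf u < n :=
      lt_of_lt_of_le (List.idxOf_lt_length_iff.2 hu') (hlenW w')
    omega
  have hC1W : ∀ (w' : W) (u : U), u ∈ P.prefW w' → M.mw w' ≠ none := by
    intro w' u hu' hnone
    have hw' : w' ∈ P.prefU u := (hmut u w').2 hu'
    have hnm : M.mu u ≠ some w' := fun h => by
      rw [(M.consistent u w').1 h] at hnone; exact Option.some_ne_none _ hnone
    have hc := cost_ge hrob u w' hw' hu' hnm
    rw [hnone] at hc
    replace hc : n ≤ ((P.prefU u).idxOf w'
            - (M.mu u).elim ((P.prefU u).idxOf w') (fun x => (P.prefU u).idxOf x))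
        + ((P.prefW w').idxOf u - (P.prefW w').idxOf u) := hc
    have hb2 := Nat.sub_le ((P.prefU u).idxOf w')
      ((M.mu u).elim ((P.prefU u).idxOf w') (fun x => (P.prefU u).idxOf x))
    have hb : (P.prefU u).idxOf w' < n :=
      lt_of_lt_of_le (List.idxOf_lt_length_iff.2 hw') (hlenU u)
    omega
  -- every matched agent is matched to its top choice
  have hC2U : ∀ (u : U) (w₀ : W), M.mu u = some w₀ → (P.prefU u).idxOf w₀ = 0 := by
    intro u w₀ hMu
    by_contra hpos
    have hw₀ : w₀ ∈ P.prefU u := (hstab.1 u w₀ hMu).1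
    cases hl : P.prefU u with
    | nil => rw [hl] at hw₀; exact absurd hw₀ (List.not_mem_nil)
    | cons a t =>
      have ha : a ∈ P.prefU u := by rw [hl]; exact List.mem_cons_self
      have hia : (P.prefU u).idxOf a = 0 := by rw [hl]; exact List.idxOf_cons_self
      have hnm : M.mu u ≠ some a := by
        rw [hMu]; intro hh; injection hh with hh
        exact hpos (hh ▸ hia)
      have hc := cost_ge hrob u a ha ((hmut u a).1 ha) hnm
      rw [hMu] at hc
      replace hc : n ≤ ((P.prefU u).idxOf a - (P.prefU u).idxOf w₀)
          + ((P.prefW a).idxOf u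
              - (M.mw a).elim ((P.prefW a).idxOf u) (fun u' => (P.prefW a).idxOf u')) := hc
      rw [hia] at hc
      have hb2 := Nat.sub_le ((P.prefW a).idxOf u)
        ((M.mw a).elim ((P.prefW a).idxOf u) (fun u' => (P.prefW a).idxOf u'))
      have hb : (P.prefW a).idxOf u < n :=
        lt_of_lt_of_le (List.idxOf_lt_length_iff.2 ((hmut u a).1 ha)) (hlenW a)
      omega
  have hC2W : ∀ (w' : W) (u₀ : U), M.mw w' = some u₀ → (P.prefW w').idxOf u₀ = 0 := by
    intro w' u₀ hMw
    by_contra hpos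
    have hu₀ : u₀ ∈ P.prefW w' := (hstab.1 u₀ w' ((M.consistent u₀ w').2 hMw)).2
    cases hl : P.prefW w' with
    | nil => rw [hl] at hu₀; exact absurd hu₀ (List.not_mem_nil)
    | cons a t =>
      have ha : a ∈ P.prefW w' := by rw [hl]; exact List.mem_cons_self
      have hia : (P.prefW w').idxOf a = 0 := by rw [hl]; exact List.idxOf_cons_self
      have hnm : M.mu a ≠ some w' := by
        intro h
        have := (M.consistent a w').1 h
        rw [hMw] at this; injection this with hh
        exact hpos (hh ▸ hia)
      have hc := cost_ge hrob a w' ((hmut a w').2 ha) ha hnm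
      rw [hMw] at hc
      replace hc : n ≤ ((P.prefU a).idxOf w'
              - (M.mu a).elim ((P.prefU a).idxOf w') (fun x => (P.prefU a).idxOf x))
          + ((P.prefW w').idxOf a - (P.prefW w').idxOf u₀) := hc
      rw [hia] at hc
      have hb2 := Nat.sub_le ((P.prefU a).idxOf w')
        ((M.mu a).elim ((P.prefU a).idxOf w') (fun x => (P.prefU a).idxOf x))
      have hb : (P.prefU a).idxOf w' < n :=
        lt_of_lt_of_le (List.idxOf_lt_length_iff.2 ((hmut a w').2 ha)) (hlenU a)
      omega
  -- rank sums of non-matched acceptable pairs are at least n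
  have hC3 : ∀ (u : U) (w' : W), w' ∈ P.prefU u → M.mu u ≠ some w' →
      n ≤ (P.prefU u).idxOf w' + (P.prefW w').idxOf u := by
    intro u w' hw' hnm
    have hu' := (hmut u w').1 hw'
    have hc := cost_ge hrob u w' hw' hu' hnm
    cases hMu : M.mu u with
    | none => exact absurd hMu (hC1U u w' hw')
    | some w₀ =>
      cases hMw : M.mw w' with
      | none => exact absurd hMw (hC1W w' u hu')
      | some u₀ =>
        rw [hMu, hMw] at hc
        replace hc : n ≤ ((P.prefU u).idxOf w' - (P.prefU u).idxOf w₀)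
            + ((P.prefW w').idxOf u - (P.prefW w').idxOf u₀) := hc
        rw [hC2U u w₀ hMu, hC2W w' u₀ hMw] at hc
        omega
  -- case: both have w on top
  by_cases hk0 : (P.prefU u1).idxOf w = 0
  · have htop : ∀ u : U, w ∈ P.prefU u → (P.prefU u).idxOf w = 0 → M.mu u = some w := by
      intro u hwu hw0
      cases hMu : M.mu u with
      | none => exact absurd hMu (hC1U u w hwu)
      | some w₀ =>
        have h0 := hC2U u w₀ hMu
        have hww : w₀ = w :=
          (List.idxOf_inj (hstab.1 u w₀ hMu).1).1 (by rw [h0, hw0])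
        rw [hww]
    have e1 := (M.consistent u1 w).1 (htop u1 h1 hk0)
    have e2 := (M.consistent u2 w).1 (htop u2 h2 (by rw [← hEq]; exact hk0))
    rw [e1] at e2
    injection e2 with e2
    exact hne e2
  · have hnm1 : M.mu u1 ≠ some w := fun h => hk0 (hC2U u1 w h)
    have hnm2 : M.mu u2 ≠ some w := fun h => hk0 (by rw [hEq]; exact hC2U u2 w h)
    have hs : (P.prefW w).idxOf u1 ≠ (P.prefW w).idxOf u2 := fun h =>
      hne ((List.idxOf_inj ((hmut u1 w).1 h1)).1 h)
    -- the main counting argument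
    have main : ∀ a b : U, M.mu a ≠ some w → M.mu b ≠ some w → w ∈ P.prefU a →
        w ∈ P.prefU b → (P.prefU a).idxOf w = (P.prefU b).idxOf w →
        (P.prefW w).idxOf a < (P.prefW w).idxOf b → False := by
      intro a b hnma hnmb hwa hwb heq hlt
      have hmemfib : ∀ (u : U) (w' : W),
          w' ∈ fiberU P M u ↔ (w' ∈ P.prefU u ∧ M.mu u ≠ some w') := by
        intro u w'
        simp [fiberU]
      have hmemfibW : ∀ (w' : W) (u : U),
          u ∈ fiberW P M w' ↔ (u ∈ P.prefW w' ∧ M.mw w' ≠ some u) := by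
        intro w' u
        simp [fiberW]
      have hswap : ∀ f : U → W → ℕ,
          (∑ u : U, ∑ w' ∈ fiberU P M u, f u w')
            = (∑ w' : W, ∑ u ∈ fiberW P M w', f u w') := by
        intro f
        have hr1 : ∀ u : U, ∑ w' ∈ fiberU P M u, f u w'
            = ∑ w' : W, if w' ∈ fiberU P M u then f u w' else 0 := by
          intro u
          rw [Finset.sum_ite_mem, Finset.univ_inter]
        have hr2 : ∀ w' : W, ∑ u ∈ fiberW P M w', f u w'
            = ∑ u : U, if u ∈ fiberW P M w' then f u w' else 0 := by
          intro w'
          rw [Finset.sum_ite_mem, Finset.univ_inter]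
        simp only [hr1, hr2]
        rw [Finset.sum_comm]
        apply Finset.sum_congr rfl
        intro w' _
        apply Finset.sum_congr rfl
        intro u _
        have hcond : (w' ∈ fiberU P M u) ↔ (u ∈ fiberW P M w') := by
          rw [hmemfib, hmemfibW]
          constructor
          · rintro ⟨hm, hc⟩
            exact ⟨(hmut u w').1 hm, fun h => hc ((M.consistent u w').2 h)⟩
          · rintro ⟨hm, hc⟩
            exact ⟨(hmut u w').2 hm, fun h => hc ((M.consistent u w').1 h)⟩
        by_cases hin : w' ∈ fiberU P M u
        · rw [if_pos hin, if_pos (hcond.1 hin)]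
        · rw [if_neg hin, if_neg (fun hh => hin (hcond.2 hh))]
      -- lower bound
      have hterm : ∀ u : U, ∀ w' ∈ fiberU P M u,
          n ≤ (P.prefU u).idxOf w' + (P.prefW w').idxOf u := by
        intro u w' hm
        rw [hmemfib] at hm
        exact hC3 u w' hm.1 hm.2
      have houter : ∀ u : U, n * (fiberU P M u).card
          ≤ ∑ w' ∈ fiberU P M u, ((P.prefU u).idxOf w' + (P.prefW w').idxOf u) := by
        intro u
        calc n * (fiberU P M u).card = ∑ _w' ∈ fiberU P M u, n := by
              rw [Finset.sum_const, smul_eq_mul, mul_comm]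
          _ ≤ _ := Finset.sum_le_sum (hterm u)
      have hbmem : w ∈ fiberU P M b := (hmemfib b w).2 ⟨hwb, hnmb⟩
      have hspecial : n + 1 ≤ (P.prefU b).idxOf w + (P.prefW w).idxOf b := by
        have := hC3 a w hwa hnma
        omega
      have hsb : n * (fiberU P M b).card + 1
          ≤ ∑ w' ∈ fiberU P M b, ((P.prefU b).idxOf w' + (P.prefW w').idxOf b) := by
        calc n * (fiberU P M b).card + 1
            = (∑ _w' ∈ fiberU P M b, n) + (∑ w' ∈ fiberU P M b, if w' = w then 1 else 0) := by
              rw [Finset.sum_const, smul_eq_mul, mul_comm, Finset.sum_ite_eq' (fiberU P M b) w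
                (fun _ => 1), if_pos hbmem]
          _ = ∑ w' ∈ fiberU P M b, (n + if w' = w then 1 else 0) :=
              (Finset.sum_add_distrib).symm
          _ ≤ _ := by
              apply Finset.sum_le_sum
              intro w' hm
              by_cases hww : w' = w
              · subst hww
                simpa using hspecial
              · simp only [hww, if_false]
                have := hterm b w' hm
                omega
      have hLB : (∑ u : U, n * (fiberU P M u).card) + 1
          ≤ ∑ u : U, ∑ w' ∈ fiberU P M u,
              ((P.prefU u).idxOf w' + (P.prefW w').idxOf u) := by
        have hlt2' : (∑ u : U, n * (fiberU P M u).card)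
            < ∑ u : U, ∑ w' ∈ fiberU P M u,
                ((P.prefU u).idxOf w' + (P.prefW w').idxOf u) :=
          Finset.sum_lt_sum (s := Finset.univ)
            (f := fun u => n * (fiberU P M u).card)
            (g := fun u => ∑ w' ∈ fiberU P M u,
              ((P.prefU u).idxOf w' + (P.prefW w').idxOf u))
            (fun u _ => houter u)
            ⟨b, Finset.mem_univ b,
              show n * (fiberU P M b).card < ∑ w' ∈ fiberU P M b,
                ((P.prefU b).idxOf w' + (P.prefW w').idxOf b) by omega⟩
        omega
      -- upper bounds
      have hUB1 : (∑ u : U, ∑ w' ∈ fiberU P M u, (P.prefU u).idxOf w') * 2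
          ≤ ∑ u : U, n * (fiberU P M u).card := by
        rw [Finset.sum_mul]
        apply Finset.sum_le_sum
        intro u _
        apply fiber_bound (P.prefU u) (P.nodupU u) (hlenU u) (M.mu u)
        · intro hnil
          cases hl : P.prefU u with
          | nil => exact absurd hl hnil
          | cons c t =>
            exact hC1U u c (by rw [hl]; exact List.mem_cons_self)
        · intro x hx
          exact ⟨hC2U u x hx, (hstab.1 u x hx).1⟩
      have hUB2 : (∑ u : U, ∑ w' ∈ fiberU P M u, (P.prefW w').idxOf u) * 2
          ≤ ∑ u : U, n * (fiberU P M u).card := by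
        rw [hswap (fun u w' => (P.prefW w').idxOf u)]
        have hNW : (∑ u : U, n * (fiberU P M u).card)
            = ∑ w' : W, n * (fiberW P M w').card := by
          have hs2 := hswap (fun _ _ => n)
          calc (∑ u : U, n * (fiberU P M u).card)
              = ∑ u : U, ∑ _w' ∈ fiberU P M u, n := by
                apply Finset.sum_congr rfl
                intro u _
                rw [Finset.sum_const, smul_eq_mul, mul_comm]
            _ = ∑ w' : W, ∑ _u ∈ fiberW P M w', n := hs2
            _ = ∑ w' : W, n * (fiberW P M w').card := by
                apply Finset.sum_congr rfl
                intro w' _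
                rw [Finset.sum_const, smul_eq_mul, mul_comm]
        rw [hNW, Finset.sum_mul]
        apply Finset.sum_le_sum
        intro w' _
        apply fiber_bound (P.prefW w') (P.nodupW w') (hlenW w') (M.mw w')
        · intro hnil
          cases hl : P.prefW w' with
          | nil => exact absurd hl hnil
          | cons c t =>
            exact hC1W w' c (by rw [hl]; exact List.mem_cons_self)
        · intro x hx
          exact ⟨hC2W w' x hx, (hstab.1 x w' ((M.consistent x w').2 hx)).2⟩
      have hsplit : (∑ u : U, ∑ w' ∈ fiberU P M u,
              ((P.prefU u).idxOf w' + (P.prefW w').idxOf u))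
          = (∑ u : U, ∑ w' ∈ fiberU P M u, (P.prefU u).idxOf w')
            + (∑ u : U, ∑ w' ∈ fiberU P M u, (P.prefW w').idxOf u) := by
        rw [← Finset.sum_add_distrib]
        apply Finset.sum_congr rfl
        intro u _
        rw [← Finset.sum_add_distrib]
      omega
    rcases lt_or_gt_of_ne hs with hlt | hlt
    · exact main u1 u2 hnm1 hnm2 h1 h2 hEq hlt
    · exact main u2 u1 hnm2 hnm1 h2 h1 hEq.symm hlt

end KeyLemma

/-- Every profile allowing for an `(n−1)`-robust matching is position-wise
distinct. -/
theorem robust_profile_position_wise_distinct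
    {U W : Type} [DecidableEq U] [DecidableEq W] [Fintype U] [Fintype W]
    (n : ℕ) (hU : Fintype.card U = n) (hW : Fintype.card W = n)
    (P : Profile U W)
    (hmut : ∀ (u : U) (w : W), w ∈ P.prefU u ↔ u ∈ P.prefW w)
    (hrob : ∃ M : Matching U W, Robust P (n - 1) M) :
    PositionWiseDistinct P := by
  obtain ⟨M, hM⟩ := hrob
  constructor
  · intro u1 u2 w hne hm1 hm2
    exact key_one_side hU hW hmut hM u1 u2 w hne hm1 hm2
  · intro w1 w2 u hne hm1 hm2
    exact key_one_side hW hU (fun y x => (hmut x y).symm) (robust_flip hM) w1 w2 u hne hm1 hm2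
end

section
/- Let P be a profile without ties, M a stable matching of P, and q = (u*, w*, u, w) a stable quadruple of P (i.e., some stable matching of P contains both {u*, w} and {u, w*}). Then in the profile P[SH(P,q)] obtained from P by the swap set SH(P,q), the pair {u*, w*} is the only possible blocking pair of M. -/
open Finset

variable {U W : Type} [DecidableEq U] [DecidableEq W]

/-- Move `a` so that it sits immediately before `b` in `l` (if `b` currently
precedes `a`); otherwise leave `l` unchanged. -/
def moveBefore {α : Type*} [DecidableEq α] (l : List α) (a b : α) : List α :=
  if l.idxOf b < l.idxOf a then
    (l.erase a).take ((l.erase a).idxOf b) ++ a :: (l.erase a).drop ((l.erase a).idxOf b)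
  else l

theorem moveBefore_nodup {α : Type*} [DecidableEq α] {l : List α} (h : l.Nodup) (a b : α) :
    (moveBefore l a b).Nodup := by
  unfold moveBefore
  split
  · have h1 : (l.erase a).Nodup := h.erase a
    have h2 : a ∉ l.erase a := h.not_mem_erase
    have hp : ((l.erase a).take ((l.erase a).idxOf b) ++
        a :: (l.erase a).drop ((l.erase a).idxOf b)).Perm (a :: l.erase a) := by
      refine List.perm_middle.trans ?_
      rw [List.take_append_drop]
    exact hp.symm.nodup (List.nodup_cons.mpr ⟨h2, h1⟩)
  · exact h

/-- The profile `P[SH(P,q)]` for the stable quadruple `q = (us, ws, u, w)`: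
`ws` is moved immediately in front of `w` in `us`'s list (if `w` currently
precedes `ws`), and `us` is moved immediately in front of `u` in `ws`'s list
(if `u` currently precedes `us`); all other lists are unchanged. -/
def shiftProfile (P : Profile U W) (us : U) (ws : W) (u : U) (w : W) : Profile U W where
  prefU := Function.update P.prefU us (moveBefore (P.prefU us) ws w)
  prefW := Function.update P.prefW ws (moveBefore (P.prefW ws) us u)
  nodupU := by
    intro x
    rcases eq_or_ne x us with rfl | hx
    · rw [Function.update_self]; exact moveBefore_nodup (P.nodupU x) _ _
    · rw [Function.update_of_ne hx]; exact P.nodupU x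
  nodupW := by
    intro y
    rcases eq_or_ne y ws with rfl | hy
    · rw [Function.update_self]; exact moveBefore_nodup (P.nodupW y) _ _
    · rw [Function.update_of_ne hy]; exact P.nodupW y

/-- The number of swaps in the swap set `SH(P, (us, ws, u, w))`, namely
`max(rk_{us}(ws) − rk_{us}(w), 0) + max(rk_{ws}(us) − rk_{ws}(u), 0)`. -/
def shCount (P : Profile U W) (us : U) (ws : W) (u : U) (w : W) : ℕ :=
  ((P.prefU us).idxOf ws - (P.prefU us).idxOf w) +
  ((P.prefW ws).idxOf us - (P.prefW ws).idxOf u)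

/-- `(us, ws, u, w)` is a stable quadruple of `P`: four distinct agents such
that some stable matching of `P` contains both `{us, w}` and `{u, ws}`. -/
def StableQuadruple (P : Profile U W) (us : U) (ws : W) (u : U) (w : W) : Prop :=
  us ≠ u ∧ ws ≠ w ∧ ∃ M, IsStable P M ∧ M.mu us = some w ∧ M.mu u = some ws




section Aux

variable {α : Type*} [DecidableEq α]

/-- Sublists preserve the strict order of indices of members, when the ambient
list has no duplicates. -/
theorem sublist_indexOf_lt {s l : List α} (h : s.Sublist l) :
    l.Nodup → ∀ {c d : α}, c ∈ s → d ∈ s →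
      s.idxOf c < s.idxOf d → l.idxOf c < l.idxOf d := by
  induction h with
  | slnil => intro _ c d hc; simp at hc
  | @cons s l x h ih =>
      intro hl c d hc hd hlt
      have hx : x ∉ l := (List.nodup_cons.mp hl).1
      have hcx : c ≠ x := fun e => hx (e ▸ h.subset hc)
      have hdx : d ≠ x := fun e => hx (e ▸ h.subset hd)
      rw [List.idxOf_cons_ne _ hcx.symm, List.idxOf_cons_ne _ hdx.symm]
      exact Nat.succ_lt_succ (ih (List.nodup_cons.mp hl).2 hc hd hlt)
  | @cons_cons s l x h ih =>
      intro hl c d hc hd hlt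
      by_cases hcx : c = x
      · subst hcx
        have hdx : d ≠ c := by
          rintro rfl
          exact absurd hlt (lt_irrefl _)
        rw [List.idxOf_cons_self, List.idxOf_cons_ne _ (Ne.symm hdx)]
        exact Nat.succ_pos _
      · have hdx : d ≠ x := by
          rintro rfl
          rw [List.idxOf_cons_self, List.idxOf_cons_ne _ (Ne.symm hcx)] at hlt
          exact absurd hlt (by simp)
        have hc' : c ∈ s := (List.mem_cons.mp hc).resolve_left hcx
        have hd' : d ∈ s := (List.mem_cons.mp hd).resolve_left hdx
        rw [List.idxOf_cons_ne _ (Ne.symm hcx), List.idxOf_cons_ne _ (Ne.symm hdx)]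
        rw [List.idxOf_cons_ne _ (Ne.symm hcx), List.idxOf_cons_ne _ (Ne.symm hdx)] at hlt
        exact Nat.succ_lt_succ (ih (List.nodup_cons.mp hl).2 hc' hd' (Nat.lt_of_succ_lt_succ hlt))

/-- Membership in `moveBefore l a b` for elements other than `a`. -/
theorem mem_of_mem_moveBefore {l : List α} {a b c : α} (hca : c ≠ a)
    (hc : c ∈ moveBefore l a b) : c ∈ l := by
  unfold moveBefore at hc
  split at hc
  · rcases List.mem_append.mp hc with h | h
    · exact ((List.erase_sublist : (l.erase a).Sublist l)).subset (List.mem_of_mem_take h)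
    · rcases List.mem_cons.mp h with h | h
      · exact absurd h hca
      · exact ((List.erase_sublist : (l.erase a).Sublist l)).subset (List.mem_of_mem_drop h)
  · exact hc

/-- `moveBefore l a b` only improves the position of `a`; hence any strict
preference of `c ≠ a` over `d` in the new list was already present in `l`. -/
theorem indexOf_lt_of_moveBefore {l : List α} {a b c d : α} (hnd : l.Nodup)
    (hca : c ≠ a) (hc : c ∈ l) (hd : d ∈ l)
    (hlt : (moveBefore l a b).idxOf c < (moveBefore l a b).idxOf d) :
    l.idxOf c < l.idxOf d := by
  unfold moveBefore at hlt
  split at hlt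
  case isFalse => exact hlt
  case isTrue hcond =>
    set l' := l.erase a with hl'
    set k := l'.idxOf b with hk
    have hsub' : l'.Sublist l := (List.erase_sublist : (l.erase a).Sublist l)
    have hb : b ∈ l := List.idxOf_lt_length_iff.mp (lt_of_lt_of_le hcond List.idxOf_le_length)
    have hba : b ≠ a := by rintro rfl; exact absurd hcond (lt_irrefl _)
    have hb' : b ∈ l' := (List.mem_erase_of_ne hba).mpr hb
    have hc' : c ∈ l' := (List.mem_erase_of_ne hca).mpr hc
    have hklen : k < l'.length := List.idxOf_lt_length_iff.mpr hb'
    have htlen : (l'.take k).length = k := by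
      rw [List.length_take]; exact Nat.min_eq_left hklen.le
    by_cases hda : d = a
    · subst hda
      have hanott : d ∉ l'.take k := fun h =>
        (hnd.not_mem_erase) (List.mem_of_mem_take h)
      have hidxd : (l'.take k ++ d :: l'.drop k).idxOf d = k := by
        rw [List.idxOf_append_of_notMem hanott, List.idxOf_cons_self, htlen]
        omega
      rw [hidxd] at hlt
      have hct : c ∈ l'.take k := by
        by_contra hct
        rw [List.idxOf_append_of_notMem hct, htlen] at hlt
        omega
      have hcb : l'.idxOf c < k := by
        have : l'.idxOf c = (l'.take k).idxOf c := by
          conv_lhs => rw [← List.take_append_drop k l']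
          rw [List.idxOf_append_of_mem hct]
        have h3 := List.idxOf_lt_length_iff.mpr hct
        rw [this]
        omega
      have hcb' : l.idxOf c < l.idxOf b := by
        have hcbne : c ≠ b := by rintro rfl; rw [← hk] at hcb; exact absurd hcb (lt_irrefl _)
        exact sublist_indexOf_lt hsub' hnd hc' hb' hcb
      exact lt_trans hcb' hcond
    · have hd' : d ∈ l' := (List.mem_erase_of_ne hda).mpr hd
      have hcd : c ≠ d := by
        rintro rfl; exact absurd hlt (lt_irrefl _)
      rcases Nat.lt_or_ge (l'.idxOf c) (l'.idxOf d) with h1 | h1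
      · exact sublist_indexOf_lt hsub' hnd hc' hd' h1
      · exfalso
        have hne : l'.idxOf d ≠ l'.idxOf c := fun e =>
          hcd (((List.idxOf_inj (y := c) hd').mp e).symm)
        have h2 : l'.idxOf d < l'.idxOf c := lt_of_le_of_ne h1 hne
        have hsubnew : l'.Sublist (l'.take k ++ a :: l'.drop k) := by
          conv_lhs => rw [← List.take_append_drop k l']
          exact (List.sublist_cons_self a (l'.drop k)).append_left (l'.take k)
        have hnewnd : (l'.take k ++ a :: l'.drop k).Nodup := by
          have hp : (l'.take k ++ a :: l'.drop k).Perm (a :: l') := by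
            refine List.perm_middle.trans ?_
            rw [List.take_append_drop]
          exact hp.symm.nodup (List.nodup_cons.mpr ⟨hnd.not_mem_erase, hnd.erase a⟩)
        exact absurd (sublist_indexOf_lt hsubnew hnewnd hd' hc' h2) (not_lt.mpr hlt.le)

end Aux

/-- For a stable matching `M` of `P` and a stable quadruple
`q = (us, ws, u, w)`, the pair `{us, ws}` is the only possible blocking pair of
`M` in the profile `P[SH(P, q)]`. -/
theorem only_possible_blocking_pair
    {U W : Type} [DecidableEq U] [DecidableEq W]
    (P : Profile U W) (M : Matching U W) (hM : IsStable P M)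
    (us u : U) (ws w : W) (hq : StableQuadruple P us ws u w) :
    ∀ (x : U) (y : W), IsBlocking (shiftProfile P us ws u w) M x y →
      x = us ∧ y = ws := by
  intro x y hb
  obtain ⟨hymem, hxmem, hne, hcu, hcw⟩ := hb
  rcases eq_or_ne x us with rfl | hx <;> rcases eq_or_ne y ws with rfl | hy
  · exact ⟨rfl, rfl⟩
  · exfalso
    simp only [shiftProfile, Function.update_self, Function.update_of_ne hy] at hymem hxmem hcu hcw
    refine hM.2 x y ⟨mem_of_mem_moveBefore hy hymem, hxmem, hne, ?_, hcw⟩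
    intro w' hw'
    exact indexOf_lt_of_moveBefore (P.nodupU x) hy (mem_of_mem_moveBefore hy hymem)
      (hM.1 x w' hw').1 (hcu w' hw')
  · exfalso
    simp only [shiftProfile, Function.update_self, Function.update_of_ne hx] at hymem hxmem hcu hcw
    refine hM.2 x y ⟨hymem, mem_of_mem_moveBefore hx hxmem, hne, hcu, ?_⟩
    intro u' hu'
    have hu'mem : u' ∈ P.prefW y := (hM.1 u' y ((M.consistent u' y).mpr hu')).2
    exact indexOf_lt_of_moveBefore (P.nodupW y) hx (mem_of_mem_moveBefore hx hxmem)
      hu'mem (hcw u' hu')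
  · exfalso
    simp only [shiftProfile, Function.update_of_ne hx, Function.update_of_ne hy] at hymem hxmem hcu hcw
    exact hM.2 x y ⟨hymem, hxmem, hne, hcu, hcw⟩
end

section
/- Let P1 be a profile, M a stable matching of P1, and P2 any profile in which M has a blocking pair {u*, w*} (u* ∈ U, w* ∈ W). Setting q = (u*, w*, M(w*), M(u*)), the number of swaps |SH(P1,q)| is at most τ(P1, P2), the swap distance between P1 and P2. -/
open Finset

variable {U W : Type} [DecidableEq U] [DecidableEq W]

lemma indexOf_sub_le_discordant {α : Type*} [DecidableEq α] {l1 l2 : List α}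
    (h1 : l1.Nodup) {a b : α} (ha : a ∈ l1) (hb : b ∈ l1)
    (hab : l2.idxOf a < l2.idxOf b) :
    l1.idxOf a - l1.idxOf b ≤ discordant l1 l2 := by
  set i := l1.idxOf a with hi
  set j := l1.idxOf b with hj
  rcases le_or_gt i j with hle | hji
  · simp [Nat.sub_eq_zero_of_le hle]
  have hil : i < l1.length := List.idxOf_lt_length_iff.mpr ha
  set g : ℕ → α × α := fun k =>
    if l2.idxOf a < l2.idxOf (l1.getD k b) then (l1.getD k b, a) else (b, l1.getD k b)
    with hg
  have hx : ∀ k ∈ Finset.Ico j i, l1.getD k b ∈ l1 ∧ l1.idxOf (l1.getD k b) = k := by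
    intro k hk
    have hk' : k < l1.length := lt_trans (Finset.mem_Ico.mp hk).2 hil
    rw [List.getD_eq_getElem l1 b hk']
    exact ⟨List.getElem_mem _, List.Nodup.idxOf_getElem h1 k hk'⟩
  have hmaps : ∀ k ∈ Finset.Ico j i, g k ∈ (l1.toFinset ×ˢ l1.toFinset).filter
      (fun p => l1.idxOf p.1 < l1.idxOf p.2 ∧ l2.idxOf p.2 < l2.idxOf p.1) := by
    intro k hk
    obtain ⟨hxm, hxi⟩ := hx k hk
    obtain ⟨hjk, hki⟩ := Finset.mem_Ico.mp hk
    simp only [hg, Finset.mem_filter, Finset.mem_product, List.mem_toFinset]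
    split
    · next h2 =>
      exact ⟨⟨hxm, ha⟩, by rw [hxi]; exact hki, h2⟩
    · next h2 =>
      have hxb : l1.getD k b ≠ b := by
        intro h; apply h2; rw [h]; exact hab
      have hkj : k ≠ j := by
        intro h
        exact hxb ((List.idxOf_inj hxm).mp (by rw [hxi, h]))
      exact ⟨⟨hb, hxm⟩, by rw [hxi]; exact lt_of_le_of_ne hjk (Ne.symm hkj),
        lt_of_le_of_lt (not_lt.mp h2) hab⟩
  have hinj : Set.InjOn g (Finset.Ico j i) := by
    intro k hk k' hk' heq
    obtain ⟨hxm, hxi⟩ := hx k (by simpa using hk)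
    obtain ⟨hxm', hxi'⟩ := hx k' (by simpa using hk')
    have hki : k < i := (Finset.mem_Ico.mp (by simpa using hk)).2
    have hki' : k' < i := (Finset.mem_Ico.mp (by simpa using hk')).2
    simp only [hg] at heq
    split at heq <;> split at heq <;>
        simp only [Prod.mk.injEq] at heq <;> obtain ⟨h₁, h₂⟩ := heq
    · rw [← hxi, ← hxi', h₁]
    · exfalso; rw [← h₂] at hxi'; rw [← hi] at hxi'; omega
    · exfalso; rw [h₂] at hxi; rw [← hi] at hxi; omega
    · rw [← hxi, ← hxi', h₂]
  calc i - j = (Finset.Ico j i).card := (Nat.card_Ico j i).symm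
    _ ≤ _ := Finset.card_le_card_of_injOn g hmaps hinj

lemma term_le_listDist {α : Type*} [DecidableEq α] {l1 l2 : List α}
    (h1 : l1.Nodup) {a b : α} (hb : b ∈ l1) (ha2 : a ∈ l2)
    (hab : l2.idxOf a < l2.idxOf b) :
    ((l1.idxOf a - l1.idxOf b : ℕ) : ℕ∞) ≤ listDist l1 l2 := by
  unfold listDist
  split
  · next hfs =>
    have ha : a ∈ l1 := by
      rw [← List.mem_toFinset, hfs, List.mem_toFinset]; exact ha2
    exact_mod_cast indexOf_sub_le_discordant h1 ha hb hab
  · exact le_top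

/-- If `M` is stable in `P1` and `{us, ws}` blocks `M` in `P2`, then for the
stable quadruple `q = (us, ws, M(ws), M(us))` the number of swaps in
`SH(P1, q)` is at most `τ(P1, P2)`. -/
theorem swap_set_size_le_profile_distance
    {U W : Type} [DecidableEq U] [DecidableEq W] [Fintype U] [Fintype W]
    (P1 P2 : Profile U W) (M : Matching U W) (hM : IsStable P1 M)
    (us u : U) (ws w : W)
    (hu : M.mw ws = some u) (hw : M.mu us = some w)
    (hb : IsBlocking P2 M us ws) :
    ((shCount P1 us ws u w : ℕ) : ℕ∞) ≤ profDist P1 P2 := by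
  obtain ⟨hws2, hus2, hne, hU, hW⟩ := hb
  have hmu : M.mu u = some ws := (M.consistent u ws).mpr hu
  have h1 := hM.1 us w hw
  have h2 := hM.1 u ws hmu
  have hab1 : (P2.prefU us).idxOf ws < (P2.prefU us).idxOf w := hU w hw
  have hab2 : (P2.prefW ws).idxOf us < (P2.prefW ws).idxOf u := hW u hu
  have t1 := term_le_listDist (P1.nodupU us) h1.1 hws2 hab1
  have t2 := term_le_listDist (P1.nodupW ws) h2.2 hus2 hab2
  have s1 : listDist (P1.prefU us) (P2.prefU us) ≤ ∑ x, listDist (P1.prefU x) (P2.prefU x) :=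
    Finset.single_le_sum (f := fun x => listDist (P1.prefU x) (P2.prefU x))
      (fun x _ => zero_le) (Finset.mem_univ us)
  have s2 : listDist (P1.prefW ws) (P2.prefW ws) ≤ ∑ x, listDist (P1.prefW x) (P2.prefW x) :=
    Finset.single_le_sum (f := fun x => listDist (P1.prefW x) (P2.prefW x))
      (fun x _ => zero_le) (Finset.mem_univ ws)
  unfold shCount profDist
  push_cast
  exact add_le_add (t1.trans s1) (t2.trans s2)
end
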